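/- arXiv:2505.01628 — 6 statements merged into one kernel-verified Lean document; each statement's English description precedes it below -/
import Mathlib

section
/- Let K ≥ 3 be an integer. Let m(t), n₁(t), …, n_K(t) be sequences of positive integers tending to ∞ such that m(t)/n_j(t) → c_j with c_j > K for each j ∈ {1,…,K}. Then there exist C > 0 and T such that for all t ≥ T the set Ψ_{m(t),n⃗(t)} is nonempty, m(t) > n₁(t) + ⋯ + n_K(t), and the fraction of pairs (Γ, s) ∈ Ψ_{m(t),n⃗(t)} × 𝔽₂^{m(t)} for which Γx = s has a solution x is at most C·2^{−(m(t) − (n₁(t)+⋯+n_K(t)))}. In particular this fraction tends to 0 (asymptotically almost sure unsatisfiability). -/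
open Filter

/-- Membership in `A_{m,n,k}`: exactly `k` ones in every row, at least two ones
in every column. -/
def IsAMem {m n : ℕ} (k : ℕ) (A : Matrix (Fin m) (Fin n) (ZMod 2)) : Prop :=
  (∀ i : Fin m, Nat.card {v : Fin n // A i v ≠ 0} = k) ∧
  (∀ v : Fin n, 2 ≤ Nat.card {i : Fin m // A i v ≠ 0})

/-- Membership in `Ψ_{m,n⃗}`: a block matrix `Γ = (A₁ | ⋯ | A_K)` with
`A_j ∈ A_{m, n_j, 1}` for each `j`. -/
def IsPsiMem {K m : ℕ} {n : Fin K → ℕ}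
    (Γ : Matrix (Fin m) ((j : Fin K) × Fin (n j)) (ZMod 2)) : Prop :=
  ∀ j : Fin K, IsAMem 1 (Matrix.of fun i v => Γ i ⟨j, v⟩)

/-- The fraction of pairs `(Γ, s) ∈ Ψ_{m,n⃗} × 𝔽₂^m` for which `Γ x = s` is solvable. -/
noncomputable def psiFrac (K m : ℕ) (n : Fin K → ℕ) : ℝ :=
  (Nat.card {p : Matrix (Fin m) ((j : Fin K) × Fin (n j)) (ZMod 2) × (Fin m → ZMod 2) //
      IsPsiMem p.1 ∧ ∃ x : ((j : Fin K) × Fin (n j)) → ZMod 2, p.1.mulVec x = p.2} : ℝ) /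
  ((Nat.card {Γ : Matrix (Fin m) ((j : Fin K) × Fin (n j)) (ZMod 2) // IsPsiMem Γ} : ℝ)
    * 2 ^ m)

lemma goodA_isAMem {m n : ℕ} (hn : 0 < n) (hmn : 2 * n ≤ m) :
    IsAMem 1 (Matrix.of fun (i : Fin m) (v : Fin n) =>
      if (v : ℕ) = min ((i : ℕ) / 2) (n - 1) then (1 : ZMod 2) else 0) := by
  have h10 : (1 : ZMod 2) ≠ 0 := by decide
  constructor
  · intro i
    have hcond : ∀ v : Fin n,
        ((Matrix.of fun (i : Fin m) (v : Fin n) =>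
            if (v : ℕ) = min ((i : ℕ) / 2) (n - 1) then (1 : ZMod 2) else 0) i v ≠ 0)
          ↔ (v : ℕ) = min ((i : ℕ) / 2) (n - 1) := by
      intro v
      by_cases h : (v : ℕ) = min ((i : ℕ) / 2) (n - 1) <;> simp [h, h10]
    rw [Nat.card_congr (Equiv.subtypeEquivRight hcond)]
    have hw : min ((i : ℕ) / 2) (n - 1) < n := by omega
    haveI : Nonempty {v : Fin n // (v : ℕ) = min ((i : ℕ) / 2) (n - 1)} :=
      ⟨⟨⟨_, hw⟩, rfl⟩⟩
    haveI : Subsingleton {v : Fin n // (v : ℕ) = min ((i : ℕ) / 2) (n - 1)} := by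
      constructor
      rintro ⟨v, hv⟩ ⟨u, hu⟩
      exact Subtype.ext (Fin.ext (hv.trans hu.symm))
    exact Nat.card_unique
  · intro v
    have hv := v.isLt
    rw [Nat.card_eq_fintype_card]
    refine Fintype.one_lt_card_iff.mpr
      ⟨⟨⟨2 * (v : ℕ), by omega⟩, ?_⟩, ⟨⟨2 * (v : ℕ) + 1, by omega⟩, ?_⟩, ?_⟩
    · show (if ((v : ℕ) = min ((2 * (v : ℕ)) / 2) (n - 1)) then (1 : ZMod 2) else 0) ≠ 0
      rw [if_pos (by omega)]; exact h10
    · show (if ((v : ℕ) = min ((2 * (v : ℕ) + 1) / 2) (n - 1)) then (1 : ZMod 2) else 0) ≠ 0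
      rw [if_pos (by omega)]; exact h10
    · simp only [ne_eq, Subtype.mk.injEq, Fin.mk.injEq]
      omega

lemma psi_nonempty {K m : ℕ} {n : Fin K → ℕ} (hn : ∀ j, 0 < n j) (h2 : ∀ j, 2 * n j ≤ m) :
    Nonempty {Γ : Matrix (Fin m) ((j : Fin K) × Fin (n j)) (ZMod 2) // IsPsiMem Γ} := by
  refine ⟨⟨Matrix.of fun i p =>
    if (p.2 : ℕ) = min ((i : ℕ) / 2) (n p.1 - 1) then (1 : ZMod 2) else 0, ?_⟩⟩
  intro j
  exact goodA_isAMem (hn j) (h2 j)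

lemma psiFrac_le (K m : ℕ) (n : Fin K → ℕ)
    (hne : Nonempty {Γ : Matrix (Fin m) ((j : Fin K) × Fin (n j)) (ZMod 2) // IsPsiMem Γ}) :
    psiFrac K m n ≤ (2 : ℝ) ^ ((∑ j : Fin K, (n j : ℤ)) - (m : ℤ)) := by
  classical
  have hDpos : 0 < Nat.card {Γ : Matrix (Fin m) ((j : Fin K) × Fin (n j)) (ZMod 2) // IsPsiMem Γ} :=
    Nat.card_pos
  have hcount : Nat.card {p : Matrix (Fin m) ((j : Fin K) × Fin (n j)) (ZMod 2) × (Fin m → ZMod 2) //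
      IsPsiMem p.1 ∧ ∃ x : ((j : Fin K) × Fin (n j)) → ZMod 2, p.1.mulVec x = p.2}
      ≤ Nat.card {Γ : Matrix (Fin m) ((j : Fin K) × Fin (n j)) (ZMod 2) // IsPsiMem Γ}
        * 2 ^ (∑ j, n j) := by
    set S := {p : Matrix (Fin m) ((j : Fin K) × Fin (n j)) (ZMod 2) × (Fin m → ZMod 2) //
      IsPsiMem p.1 ∧ ∃ x : ((j : Fin K) × Fin (n j)) → ZMod 2, p.1.mulVec x = p.2} with hS
    have key : ∀ p : S, p.1.2 = p.1.1.mulVec (Classical.choose p.2.2) :=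
      fun p => (Classical.choose_spec p.2.2).symm
    have hinj : Function.Injective
        (fun p : S => ((⟨p.1.1, p.2.1⟩ :
            {Γ : Matrix (Fin m) ((j : Fin K) × Fin (n j)) (ZMod 2) // IsPsiMem Γ}),
          Classical.choose p.2.2)) := by
      intro p q h
      have h1 := congrArg Prod.fst h
      have hΓ : p.1.1 = q.1.1 := congrArg Subtype.val h1
      have hx : Classical.choose p.2.2 = Classical.choose q.2.2 := congrArg Prod.snd h
      have hs : p.1.2 = q.1.2 := by
        rw [key p, key q, hx]
        exact congrArg (fun M => M.mulVec (Classical.choose q.2.2)) hΓ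
      exact Subtype.ext (Prod.ext hΓ hs)
    have hle := Nat.card_le_card_of_injective _ hinj
    have hcard : Nat.card ({Γ : Matrix (Fin m) ((j : Fin K) × Fin (n j)) (ZMod 2) // IsPsiMem Γ}
        × (((j : Fin K) × Fin (n j)) → ZMod 2))
        = Nat.card {Γ : Matrix (Fin m) ((j : Fin K) × Fin (n j)) (ZMod 2) // IsPsiMem Γ}
          * 2 ^ (∑ j, n j) := by
      rw [Nat.card_prod, Nat.card_fun]
      congr 1
      rw [Nat.card_eq_fintype_card, Nat.card_eq_fintype_card, Fintype.card_sigma]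
      simp
    rwa [hcard] at hle
  have hden : (0 : ℝ) < ((Nat.card {Γ : Matrix (Fin m) ((j : Fin K) × Fin (n j)) (ZMod 2) //
      IsPsiMem Γ} : ℝ)) * 2 ^ m := by positivity
  unfold psiFrac
  calc (Nat.card {p : Matrix (Fin m) ((j : Fin K) × Fin (n j)) (ZMod 2) × (Fin m → ZMod 2) //
      IsPsiMem p.1 ∧ ∃ x : ((j : Fin K) × Fin (n j)) → ZMod 2, p.1.mulVec x = p.2} : ℝ)
      / ((Nat.card {Γ : Matrix (Fin m) ((j : Fin K) × Fin (n j)) (ZMod 2) // IsPsiMem Γ} : ℝ)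
        * 2 ^ m)
      ≤ ((Nat.card {Γ : Matrix (Fin m) ((j : Fin K) × Fin (n j)) (ZMod 2) // IsPsiMem Γ} : ℝ)
          * 2 ^ (∑ j, n j))
        / ((Nat.card {Γ : Matrix (Fin m) ((j : Fin K) × Fin (n j)) (ZMod 2) // IsPsiMem Γ} : ℝ)
          * 2 ^ m) := by
        gcongr
        exact_mod_cast hcount
    _ = (2 : ℝ) ^ ((∑ j : Fin K, (n j : ℤ)) - (m : ℤ)) := by
        rw [mul_div_mul_left _ _
          (by positivity : ((Nat.card {Γ : Matrix (Fin m) ((j : Fin K) × Fin (n j)) (ZMod 2) //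
            IsPsiMem Γ} : ℝ)) ≠ 0)]
        rw [← zpow_natCast (2 : ℝ) (∑ j, n j), ← zpow_natCast (2 : ℝ) m,
          ← zpow_sub₀ (two_ne_zero)]
        norm_num [Nat.cast_sum]

lemma psiFrac_nonneg (K m : ℕ) (n : Fin K → ℕ) : 0 ≤ psiFrac K m n := by
  unfold psiFrac
  positivity

theorem stmt3 (K : ℕ) (hK3 : 3 ≤ K)
    (m : ℕ → ℕ) (n : ℕ → Fin K → ℕ)
    (hm : ∀ t, 0 < m t) (hn : ∀ t j, 0 < n t j)
    (hmtop : Tendsto m atTop atTop)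
    (hntop : ∀ j, Tendsto (fun t => n t j) atTop atTop)
    (c : Fin K → ℝ)
    (hratio : ∀ j, Tendsto (fun t => (m t : ℝ) / (n t j : ℝ)) atTop (nhds (c j)))
    (hcK : ∀ j, (K : ℝ) < c j) :
    (∃ C > (0:ℝ), ∃ T : ℕ, ∀ t ≥ T,
      Nonempty {Γ : Matrix (Fin (m t)) ((j : Fin K) × Fin (n t j)) (ZMod 2) // IsPsiMem Γ} ∧
      (∑ j : Fin K, n t j) < m t ∧
      psiFrac K (m t) (n t) ≤ C * (2:ℝ) ^ (-((m t : ℤ) - ∑ j : Fin K, (n t j : ℤ)))) ∧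
    Tendsto (fun t => psiFrac K (m t) (n t)) atTop (nhds 0) := by
  have hKpos : (0 : ℝ) < K := by
    have : (3 : ℝ) ≤ K := by exact_mod_cast hK3
    linarith
  have hcpos : ∀ j, (0 : ℝ) < c j := fun j => lt_trans hKpos (hcK j)
  -- eventually 2 * n t j ≤ m t for all j
  have hE1 : ∀ᶠ t in atTop, ∀ j, 2 * n t j ≤ m t := by
    rw [eventually_all]
    intro j
    have h2 : (2 : ℝ) < c j := by
      have : (3 : ℝ) ≤ K := by exact_mod_cast hK3
      linarith [hcK j]
    filter_upwards [(hratio j).eventually_const_lt h2] with t ht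
    have hnpos : (0 : ℝ) < (n t j : ℝ) := by exact_mod_cast hn t j
    have : (2 : ℝ) * n t j < m t := by
      rw [lt_div_iff₀ hnpos] at ht
      linarith
    exact_mod_cast this.le
  -- ratio sums
  set ρ : ℝ := ∑ j : Fin K, (c j)⁻¹ with hρ
  have hρ0 : 0 ≤ ρ := Finset.sum_nonneg fun j _ => (inv_nonneg.mpr (hcpos j).le)
  have hρ1 : ρ < 1 := by
    have hne : (Finset.univ : Finset (Fin K)).Nonempty := by
      rw [Finset.univ_nonempty_iff]
      exact Fin.pos_iff_nonempty.mp (by omega)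
    have := Finset.sum_lt_sum_of_nonempty hne
      (f := fun j : Fin K => (c j)⁻¹) (g := fun _ : Fin K => ((K : ℝ))⁻¹)
      (fun j _ => (inv_lt_inv₀ (hcpos j) hKpos).mpr (hcK j))
    have hsum : ∑ _j : Fin K, ((K : ℝ))⁻¹ = 1 := by
      rw [Finset.sum_const, Finset.card_univ, Fintype.card_fin, nsmul_eq_mul]
      field_simp
    rw [hsum] at this
    rw [hρ]; exact this
  have hsumtend : Tendsto (fun t => ∑ j : Fin K, (n t j : ℝ) / (m t : ℝ)) atTop (nhds ρ) := by
    apply tendsto_finset_sum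
    intro j _
    have := ((hratio j).inv₀ (ne_of_gt (hcpos j)))
    simpa [inv_div] using this
  -- eventually sum of n < (1+ρ)/2 * m and related bounds
  have hmid : ρ < (1 + ρ) / 2 := by linarith
  have hE2 : ∀ᶠ t in atTop, (∑ j : Fin K, (n t j : ℝ)) < (1 + ρ) / 2 * (m t : ℝ) := by
    filter_upwards [hsumtend.eventually_lt_const hmid] with t ht
    have hmpos : (0 : ℝ) < (m t : ℝ) := by exact_mod_cast hm t
    have : (∑ j : Fin K, (n t j : ℝ) / (m t : ℝ)) = (∑ j : Fin K, (n t j : ℝ)) / (m t : ℝ) := by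
      rw [Finset.sum_div]
    rw [this, div_lt_iff₀ hmpos] at ht
    linarith
  have hNlt : ∀ᶠ t in atTop, (∑ j : Fin K, n t j) < m t := by
    filter_upwards [hE2] with t ht
    have hmpos : (0 : ℝ) < (m t : ℝ) := by exact_mod_cast hm t
    have h1 : ((1 : ℝ) + ρ) / 2 < 1 := by linarith
    have : (∑ j : Fin K, (n t j : ℝ)) < (m t : ℝ) := by nlinarith
    have : ((∑ j : Fin K, n t j : ℕ) : ℝ) < (m t : ℝ) := by push_cast; exact this
    exact_mod_cast this
  -- the natural-number gap tends to infinity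
  have hgap : Tendsto (fun t => m t - (∑ j : Fin K, n t j)) atTop atTop := by
    rw [← tendsto_natCast_atTop_iff (R := ℝ)]
    have haux : Tendsto (fun t => (1 - ρ) / 2 * (m t : ℝ)) atTop atTop := by
      apply Tendsto.const_mul_atTop (by linarith : (0:ℝ) < (1 - ρ) / 2)
      exact tendsto_natCast_atTop_atTop.comp hmtop
    apply tendsto_atTop_mono' atTop _ haux
    filter_upwards [hE2, hNlt] with t ht hlt
    have : ((m t - (∑ j : Fin K, n t j) : ℕ) : ℝ)
        = (m t : ℝ) - ((∑ j : Fin K, n t j : ℕ) : ℝ) := by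
      rw [Nat.cast_sub hlt.le]
    rw [this]
    push_cast
    linarith
  -- the main eventual bound
  have hbound : ∀ᶠ t in atTop,
      Nonempty {Γ : Matrix (Fin (m t)) ((j : Fin K) × Fin (n t j)) (ZMod 2) // IsPsiMem Γ} ∧
      (∑ j : Fin K, n t j) < m t ∧
      psiFrac K (m t) (n t) ≤ (2:ℝ) ^ (-((m t : ℤ) - ∑ j : Fin K, (n t j : ℤ))) := by
    filter_upwards [hE1, hNlt] with t h1 h2
    have hnonempty := psi_nonempty (hn t) h1
    refine ⟨hnonempty, h2, ?_⟩
    have := psiFrac_le K (m t) (n t) hnonempty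
    have heq : (∑ j : Fin K, ((n t j : ℤ))) - (m t : ℤ)
        = -((m t : ℤ) - ∑ j : Fin K, (n t j : ℤ)) := by ring
    rwa [heq] at this
  constructor
  · obtain ⟨T, hT⟩ := eventually_atTop.mp hbound
    exact ⟨1, one_pos, T, fun t ht => by
      obtain ⟨a, b, d⟩ := hT t ht
      exact ⟨a, b, by simpa using d⟩⟩
  · -- squeeze
    apply squeeze_zero' (g := fun t => (1 / 2 : ℝ) ^ (m t - (∑ j : Fin K, n t j)))
    · exact Eventually.of_forall fun t => psiFrac_nonneg _ _ _
    · filter_upwards [hbound, hNlt] with t ht hlt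
      refine ht.2.2.trans (le_of_eq ?_)
      have hd : (m t : ℤ) - (∑ j : Fin K, (n t j : ℤ))
          = ((m t - (∑ j : Fin K, n t j) : ℕ) : ℤ) := by
        rw [Nat.cast_sub hlt.le]
        push_cast
        ring
      rw [hd, ← zpow_natCast ((1:ℝ)/2) (m t - (∑ j : Fin K, n t j))]
      rw [one_div, inv_zpow, ← zpow_neg]
    · exact (tendsto_pow_atTop_nhds_zero_of_lt_one (by norm_num) (by norm_num)).comp hgap
end

section
/- Let m, n ≥ 1 be integers, let Ω be a finite nonempty type with a probability mass function p (p(ω) ≥ 0, Σ_ω p(ω) = 1), and let A : Ω → (m×n matrices over 𝔽₂) be arbitrary. For ω ∈ Ω and s ∈ 𝔽₂^m let N(ω, s) = |{x ∈ 𝔽₂^n : A(ω)x = s}|, and let X(ω) be the number of nonempty critical row sets of A(ω). Then 2^{−m} · Σ_{s ∈ 𝔽₂^m} Σ_{ω ∈ Ω} p(ω) · N(ω,s)² = 2^{2(n−m)} · (Σ_{ω ∈ Ω} p(ω) X(ω) + 1). Equivalently, if s is uniform on 𝔽₂^m and independent of A, then E[N] = 2^{n−m} and E[N²]/E[N]²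 = E[X] + 1. -/
open Module LinearMap Matrix

section aux

variable {m n : ℕ}

lemma aux_card_mulVec_zero (B : Matrix (Fin m) (Fin n) (ZMod 2)) :
    Nat.card {x : Fin n → ZMod 2 // B.mulVec x = 0} =
      2 ^ (Module.finrank (ZMod 2) (LinearMap.ker B.mulVecLin)) := by
  have e : {x : Fin n → ZMod 2 // B.mulVec x = 0} ≃ LinearMap.ker B.mulVecLin :=
    Equiv.subtypeEquivRight (fun x => by simp [LinearMap.mem_ker])
  rw [Nat.card_congr e]
  have : Fintype ↥(LinearMap.ker B.mulVecLin) := Fintype.ofFinite _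
  rw [Nat.card_eq_fintype_card, card_eq_pow_finrank (K := ZMod 2), ZMod.card]

lemma aux_rank_nullity (B : Matrix (Fin m) (Fin n) (ZMod 2)) :
    Module.finrank (ZMod 2) (LinearMap.ker B.mulVecLin) + B.rank = n := by
  have h := LinearMap.finrank_range_add_finrank_ker B.mulVecLin
  rw [Module.finrank_fin_fun] at h
  rw [Matrix.rank, Nat.add_comm] at *
  omega

lemma aux_sum_sq (B : Matrix (Fin m) (Fin n) (ZMod 2)) :
    ∑ s : Fin m → ZMod 2, (Nat.card {x : Fin n → ZMod 2 // B.mulVec x = s}) ^ 2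
      = Nat.card {x : Fin n → ZMod 2 // B.mulVec x = 0} * 2 ^ n := by
  have e2 : (Σ s : Fin m → ZMod 2,
      ({x : Fin n → ZMod 2 // B.mulVec x = s} × {x : Fin n → ZMod 2 // B.mulVec x = s})) ≃
      {p : (Fin n → ZMod 2) × (Fin n → ZMod 2) // B.mulVec p.1 = B.mulVec p.2} :=
    { toFun := fun q => ⟨(q.2.1.1, q.2.2.1), by rw [q.2.1.2, q.2.2.2]⟩
      invFun := fun p => ⟨B.mulVec p.1.1, (⟨p.1.1, rfl⟩, ⟨p.1.2, p.2.symm⟩)⟩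
      left_inv := fun q => by
        obtain ⟨s, x, y⟩ := q
        obtain ⟨x, hx⟩ := x
        obtain ⟨y, hy⟩ := y
        subst hx
        rfl
      right_inv := fun p => rfl }
  have e1 : {p : (Fin n → ZMod 2) × (Fin n → ZMod 2) // B.mulVec p.1 = B.mulVec p.2} ≃
      {z : Fin n → ZMod 2 // B.mulVec z = 0} × (Fin n → ZMod 2) :=
    { toFun := fun p => (⟨p.1.1 - p.1.2, by rw [Matrix.mulVec_sub, p.2, sub_self]⟩, p.1.2)
      invFun := fun q => ⟨(q.1.1 + q.2, q.2), by rw [Matrix.mulVec_add, q.1.2, zero_add]⟩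
      left_inv := fun p => Subtype.ext (Prod.ext (by simp) rfl)
      right_inv := fun q => Prod.ext (Subtype.ext (by simp)) rfl }
  classical
  have := Fintype.card_congr (e2.trans e1)
  rw [Fintype.card_sigma, Fintype.card_prod] at this
  simp only [Fintype.card_prod] at this
  simp only [Nat.card_eq_fintype_card, sq]
  rw [this]
  congr 1
  simp [ZMod.card]

lemma aux_vec_finset (B : Matrix (Fin m) (Fin n) (ZMod 2)) :
    Nat.card {y : Fin m → ZMod 2 // Matrix.vecMul y B = 0}
      = Nat.card {S : Finset (Fin m) // S.Nonempty ∧ ∑ i ∈ S, B i = 0} + 1 := by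
  classical
  have key : ∀ S : Finset (Fin m),
      Matrix.vecMul (fun i => if i ∈ S then (1 : ZMod 2) else 0) B = ∑ i ∈ S, B i := by
    intro S
    funext j
    simp only [Matrix.vecMul, dotProduct]
    rw [show (∑ i ∈ S, B i) j = ∑ i ∈ S, B i j from Finset.sum_apply j S (fun i => B i)]
    rw [Finset.sum_congr rfl (fun i _ => by
      show (if i ∈ S then (1:ZMod 2) else 0) * B i j = if i ∈ S then B i j else 0
      split <;> simp)]
    rw [Finset.sum_ite_mem, Finset.univ_inter]
  have e : {S : Finset (Fin m) // ∑ i ∈ S, B i = 0} ≃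
      {y : Fin m → ZMod 2 // Matrix.vecMul y B = 0} :=
    { toFun := fun S => ⟨fun i => if i ∈ S.1 then 1 else 0, by rw [key]; exact S.2⟩
      invFun := fun y => ⟨Finset.univ.filter (fun i => y.1 i = 1), by
        rw [← key]
        convert y.2 using 2
        funext i
        simp only [Finset.mem_filter, Finset.mem_univ, true_and]
        have : ∀ a : ZMod 2, (if a = 1 then (1 : ZMod 2) else 0) = a := by decide
        exact this (y.1 i)⟩
      left_inv := fun S => Subtype.ext (by
        ext i
        simp only [Finset.mem_filter, Finset.mem_univ, true_and]
        split <;> simp_all <;> decide)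
      right_inv := fun y => Subtype.ext (by
        funext i
        simp only [Finset.mem_filter, Finset.mem_univ, true_and]
        have : ∀ a : ZMod 2, (if a = 1 then (1 : ZMod 2) else 0) = a := by decide
        exact this (y.1 i)) }
  rw [← Nat.card_congr e]
  rw [Nat.card_eq_fintype_card, Nat.card_eq_fintype_card,
    Fintype.card_subtype, Fintype.card_subtype]
  have hfil : Finset.univ.filter (fun S : Finset (Fin m) => ∑ i ∈ S, B i = 0)
      = insert ∅ (Finset.univ.filter
          (fun S : Finset (Fin m) => S.Nonempty ∧ ∑ i ∈ S, B i = 0)) := by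
    ext S
    simp only [Finset.mem_filter, Finset.mem_univ, true_and, Finset.mem_insert]
    constructor
    · intro h
      rcases eq_or_ne S ∅ with h' | h'
      · exact Or.inl h'
      · exact Or.inr ⟨Finset.nonempty_iff_ne_empty.mpr h', h⟩
    · rintro (rfl | ⟨_, h⟩)
      · exact Finset.sum_empty
      · exact h
  rw [hfil, Finset.card_insert_of_notMem (by
    simp [Finset.not_nonempty_empty])]

lemma aux_key (B : Matrix (Fin m) (Fin n) (ZMod 2)) :
    (2:ℝ) ^ (-(m:ℤ)) * ∑ s : Fin m → ZMod 2,
        ((Nat.card {x : Fin n → ZMod 2 // B.mulVec x = s} : ℝ)) ^ 2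
      = (2:ℝ) ^ (2 * ((n:ℤ) - (m:ℤ))) *
        ((Nat.card {S : Finset (Fin m) // S.Nonempty ∧ ∑ i ∈ S, B i = 0} : ℝ) + 1) := by
  have h1 := aux_card_mulVec_zero B
  have h2 := aux_rank_nullity B
  have h3 := aux_sum_sq B
  have h4 := aux_vec_finset B
  have h6 : Nat.card {y : Fin m → ZMod 2 // Matrix.vecMul y B = 0}
      = 2 ^ (Module.finrank (ZMod 2) (LinearMap.ker (Matrix.mulVecLin Bᵀ))) := by
    rw [← aux_card_mulVec_zero Bᵀ]
    apply Nat.card_congr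
    exact Equiv.subtypeEquivRight (fun y => by rw [Matrix.mulVec_transpose])
  have h7 := aux_rank_nullity Bᵀ
  rw [Matrix.rank_transpose] at h7
  set k := Module.finrank (ZMod 2) (LinearMap.ker B.mulVecLin) with hk
  set k' := Module.finrank (ZMod 2) (LinearMap.ker (Matrix.mulVecLin Bᵀ)) with hk'
  set r := B.rank with hr
  have hsum : ∑ s : Fin m → ZMod 2,
      ((Nat.card {x : Fin n → ZMod 2 // B.mulVec x = s} : ℝ)) ^ 2
      = ((2:ℝ) ^ k * 2 ^ n) := by
    have : ∑ s : Fin m → ZMod 2,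
        ((Nat.card {x : Fin n → ZMod 2 // B.mulVec x = s} : ℝ)) ^ 2
        = ((∑ s : Fin m → ZMod 2,
            (Nat.card {x : Fin n → ZMod 2 // B.mulVec x = s}) ^ 2 : ℕ) : ℝ) := by
      push_cast; rfl
    rw [this, h3, h1]
    push_cast; ring
  have hX1 : (Nat.card {S : Finset (Fin m) // S.Nonempty ∧ ∑ i ∈ S, B i = 0} : ℝ) + 1
      = (2:ℝ) ^ k' := by
    have : (Nat.card {S : Finset (Fin m) // S.Nonempty ∧ ∑ i ∈ S, B i = 0} + 1 : ℕ)
        = 2 ^ k' := by rw [← h4, h6]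
    calc (Nat.card {S : Finset (Fin m) // S.Nonempty ∧ ∑ i ∈ S, B i = 0} : ℝ) + 1
        = ((Nat.card {S : Finset (Fin m) // S.Nonempty ∧ ∑ i ∈ S, B i = 0} + 1 : ℕ) : ℝ) := by
          push_cast; ring
      _ = (2:ℝ) ^ k' := by rw [this]; push_cast; ring
  rw [hsum, hX1]
  have h2' : (2:ℝ) ^ k = (2:ℝ) ^ (k : ℤ) := (zpow_natCast 2 k).symm
  have two_ne : (2:ℝ) ≠ 0 := two_ne_zero
  rw [show ((2:ℝ) ^ k * 2 ^ n) = (2:ℝ) ^ ((k : ℤ) + n) by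
      rw [zpow_add₀ two_ne, zpow_natCast, zpow_natCast],
    show ((2:ℝ) ^ k' : ℝ) = (2:ℝ) ^ ((k' : ℤ)) by rw [zpow_natCast],
    ← zpow_add₀ two_ne, ← zpow_add₀ two_ne]
  congr 1
  omega

end aux

theorem stmt4 (m n : ℕ) (hm : 1 ≤ m) (hn : 1 ≤ n)
    (Ω : Type) [Fintype Ω] [Nonempty Ω]
    (p : Ω → ℝ) (hp0 : ∀ ω, 0 ≤ p ω) (hp1 : ∑ ω : Ω, p ω = 1)
    (A : Ω → Matrix (Fin m) (Fin n) (ZMod 2))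
    (N : Ω → (Fin m → ZMod 2) → ℕ)
    (hN : ∀ ω s, N ω s = Nat.card {x : Fin n → ZMod 2 // (A ω).mulVec x = s})
    (X : Ω → ℕ)
    (hX : ∀ ω, X ω =
      Nat.card {S : Finset (Fin m) // S.Nonempty ∧ ∑ i ∈ S, A ω i = 0}) :
    (2:ℝ) ^ (-(m:ℤ)) * ∑ s : Fin m → ZMod 2, ∑ ω : Ω, p ω * (N ω s : ℝ) ^ 2
      = (2:ℝ) ^ (2 * ((n:ℤ) - (m:ℤ))) * ((∑ ω : Ω, p ω * (X ω : ℝ)) + 1) := by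
  rw [Finset.sum_comm]
  have lhs_eq : (2:ℝ) ^ (-(m:ℤ)) * ∑ ω : Ω, ∑ s : Fin m → ZMod 2, p ω * (N ω s : ℝ) ^ 2
      = ∑ ω : Ω, p ω * ((2:ℝ) ^ (-(m:ℤ)) *
          ∑ s : Fin m → ZMod 2, ((Nat.card {x : Fin n → ZMod 2 // (A ω).mulVec x = s} : ℝ)) ^ 2) := by
    rw [Finset.mul_sum]
    refine Finset.sum_congr rfl (fun ω _ => ?_)
    rw [← Finset.mul_sum]
    simp only [hN]
    ring
  rw [lhs_eq]
  have : ∀ ω : Ω, p ω * ((2:ℝ) ^ (-(m:ℤ)) *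
      ∑ s : Fin m → ZMod 2, ((Nat.card {x : Fin n → ZMod 2 // (A ω).mulVec x = s} : ℝ)) ^ 2)
      = p ω * ((2:ℝ) ^ (2 * ((n:ℤ) - (m:ℤ))) * ((X ω : ℝ) + 1)) := by
    intro ω
    rw [aux_key (A ω), hX ω]
  rw [Finset.sum_congr rfl (fun ω _ => this ω)]
  have expand : ∑ ω : Ω, p ω * ((2:ℝ) ^ (2 * ((n:ℤ) - (m:ℤ))) * ((X ω : ℝ) + 1))
      = (2:ℝ) ^ (2 * ((n:ℤ) - (m:ℤ))) * ((∑ ω : Ω, p ω * (X ω : ℝ)) + ∑ ω : Ω, p ω) := by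
    symm
    rw [mul_add, Finset.mul_sum, Finset.mul_sum, ← Finset.sum_add_distrib]
    refine Finset.sum_congr rfl (fun ω _ => ?_)
    ring
  rw [expand, hp1]
end

section
/- Let K ≥ 1, m ≥ 1, and n₁, …, n_K ≥ 1 be integers with m ≥ 2n_j for every j (so each A_{m,n_j,1} is nonempty, hence Ψ_{m,n⃗} is nonempty). Then for every integer ℓ with 1 ≤ ℓ ≤ m, the uniform average of X^(ℓ) over Ψ_{m,n⃗} factors as E_{Ψ_{m,n⃗}}[X^(ℓ)] = C(m,ℓ)^{1−K} · ∏_{j=1}^{K} E_{A_{m,n_j,1}}[X^(ℓ)], where C(m,ℓ) is the binomial coefficient. -/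
/-- `X^(ℓ)(Γ)`: the number of critical row sets of `Γ` of cardinality `ℓ`,
i.e. sets of `ℓ` rows summing to the zero vector over `𝔽₂`. -/
noncomputable def Xl {m : ℕ} {ι : Type*} (ℓ : ℕ) (Γ : Matrix (Fin m) ι (ZMod 2)) : ℕ :=
  Nat.card {S : Finset (Fin m) // S.card = ℓ ∧ ∑ i ∈ S, Γ i = 0}

/-- Uniform average of `f` over a (finite) set `S`. -/
noncomputable def expectOn {α : Type*} [Fintype α] (S : Set α) (f : α → ℝ) : ℝ :=
  (∑ a : α, S.indicator f a) / (Nat.card S : ℝ)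

open Finset
open scoped Classical

section Aux

variable {m : ℕ}

private lemma xl_eq (ℓ : ℕ) {ι : Type*} [Fintype ι] (Γ : Matrix (Fin m) ι (ZMod 2)) :
    Xl ℓ Γ = (univ.filter (fun S : Finset (Fin m) => S.card = ℓ ∧ ∑ i ∈ S, Γ i = 0)).card := by
  rw [Xl, Nat.card_eq_fintype_card, Fintype.card_subtype]

private lemma ncard_eq_filter {α : Type*} [Fintype α] (p : α → Prop) :
    Nat.card {x // p x} = (univ.filter p).card := by
  rw [Nat.card_eq_fintype_card, Fintype.card_subtype]

private lemma expectOn_eq {α : Type*} [Fintype α] (P : α → Prop) (f : α → ℝ) :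
    expectOn {x | P x} f = (∑ a ∈ univ.filter P, f a) / ((univ.filter P).card : ℝ) := by
  rw [expectOn]
  congr 1
  · rw [Finset.sum_filter]
    exact Finset.sum_congr rfl fun a _ => by simp [Set.indicator_apply]
  · rw [Set.coe_setOf, ncard_eq_filter]

private lemma exists_perm (S T : Finset (Fin m)) (h : S.card = T.card) :
    ∃ σ : Equiv.Perm (Fin m), ∀ i, σ i ∈ T ↔ i ∈ S := by
  have e : {x // x ∈ S} ≃ {x // x ∈ T} := Fintype.equivOfCardEq (by simpa using h)
  refine ⟨e.extendSubtype, fun i => ?_⟩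
  constructor
  · intro hT
    by_contra hS
    exact e.extendSubtype_not_mem i hS hT
  · intro hS
    exact e.extendSubtype_mem i hS

private lemma isAMem_submatrix {n k : ℕ} (σ : Equiv.Perm (Fin m))
    {A : Matrix (Fin m) (Fin n) (ZMod 2)} (hA : IsAMem k A) : IsAMem k (A.submatrix σ id) := by
  constructor
  · intro i; exact hA.1 (σ i)
  · intro v
    have e : {i : Fin m // A.submatrix σ id i v ≠ 0} ≃ {i : Fin m // A i v ≠ 0} :=
      σ.subtypeEquiv (fun i => Iff.rfl)
    rw [Nat.card_congr e]
    exact hA.2 v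

private lemma count_eq {n : ℕ} (S T : Finset (Fin m)) (h : S.card = T.card) :
    Nat.card {A : Matrix (Fin m) (Fin n) (ZMod 2) // IsAMem 1 A ∧ ∑ i ∈ T, A i = 0}
      = Nat.card {A : Matrix (Fin m) (Fin n) (ZMod 2) // IsAMem 1 A ∧ ∑ i ∈ S, A i = 0} := by
  obtain ⟨σ, hσ⟩ := exists_perm S T h
  have himg : S.image σ = T := by
    apply Finset.eq_of_subset_of_card_le
    · intro x hx
      obtain ⟨i, hi, rfl⟩ := Finset.mem_image.mp hx
      exact (hσ i).mpr hi
    · rw [Finset.card_image_of_injective _ σ.injective]; omega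
  have hsum : ∀ A : Matrix (Fin m) (Fin n) (ZMod 2),
      (∑ i ∈ S, A.submatrix σ id i) = ∑ i ∈ T, A i := by
    intro A
    rw [← himg]; refine Eq.trans ?_ (Finset.sum_image (fun a _ b _ hab => σ.injective hab)).symm
    rfl
  refine Nat.card_congr (Equiv.subtypeEquiv
    ⟨fun A => A.submatrix σ id, fun A => A.submatrix σ.symm id, ?_, ?_⟩ ?_)
  · intro A; funext i v; simp [Matrix.submatrix_apply]
  · intro A; funext i v; simp [Matrix.submatrix_apply]
  · intro A
    show IsAMem 1 A ∧ ∑ i ∈ T, A i = 0 ↔ IsAMem 1 (A.submatrix σ id) ∧ ∑ i ∈ S, A.submatrix σ id i = 0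
    constructor
    · rintro ⟨h1, h2⟩
      exact ⟨isAMem_submatrix σ h1, by rw [hsum A]; exact h2⟩
    · rintro ⟨h1, h2⟩
      constructor
      · have := isAMem_submatrix σ.symm h1
        have hAA : (A.submatrix σ id).submatrix σ.symm id = A := by
          funext i v; simp [Matrix.submatrix_apply]
        rwa [hAA] at this
      · rw [hsum A] at h2; exact h2

private def blocksEquiv (K : ℕ) (n : Fin K → ℕ) :
    Matrix (Fin m) ((j : Fin K) × Fin (n j)) (ZMod 2)
      ≃ (∀ j : Fin K, Matrix (Fin m) (Fin (n j)) (ZMod 2)) where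
  toFun Γ j := Matrix.of fun i v => Γ i ⟨j, v⟩
  invFun f := Matrix.of fun i p => f p.1 i p.2
  left_inv Γ := by funext i p; rcases p with ⟨j, v⟩; rfl
  right_inv f := rfl

private lemma psi_count (K : ℕ) (n : Fin K → ℕ)
    (P : ∀ j : Fin K, Matrix (Fin m) (Fin (n j)) (ZMod 2) → Prop) :
    Nat.card {Γ : Matrix (Fin m) ((j : Fin K) × Fin (n j)) (ZMod 2) //
        ∀ j : Fin K, P j (Matrix.of fun i v => Γ i ⟨j, v⟩)}
      = ∏ j : Fin K, Nat.card {A : Matrix (Fin m) (Fin (n j)) (ZMod 2) // P j A} := by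
  have e1 : {Γ : Matrix (Fin m) ((j : Fin K) × Fin (n j)) (ZMod 2) //
        ∀ j : Fin K, P j (Matrix.of fun i v => Γ i ⟨j, v⟩)}
      ≃ ∀ j : Fin K, {A : Matrix (Fin m) (Fin (n j)) (ZMod 2) // P j A} :=
    (Equiv.subtypeEquiv (blocksEquiv K n) (fun Γ => Iff.rfl)).trans
      (Equiv.subtypePiEquivPi)
  rw [Nat.card_congr e1, Nat.card_eq_fintype_card, Fintype.card_pi]
  exact Finset.prod_congr rfl fun j _ => (Nat.card_eq_fintype_card).symm

private lemma crit_iff {K : ℕ} {n : Fin K → ℕ} (S : Finset (Fin m))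
    (Γ : Matrix (Fin m) ((j : Fin K) × Fin (n j)) (ZMod 2)) :
    (∑ i ∈ S, Γ i = 0) ↔
      ∀ j : Fin K, ∑ i ∈ S, (Matrix.of fun i v => Γ i ⟨j, v⟩) i = 0 := by
  constructor
  · intro h j
    funext v
    have := congrFun h ⟨j, v⟩
    exact ((Finset.sum_apply v S (Matrix.of fun i v => Γ i ⟨j, v⟩)).trans (Finset.sum_apply (⟨j, v⟩ : (j : Fin K) × Fin (n j)) S Γ).symm).trans this
  · intro h
    funext p
    rcases p with ⟨j, v⟩
    have := congrFun (h j) v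
    exact ((Finset.sum_apply (⟨j, v⟩ : (j : Fin K) × Fin (n j)) S Γ).trans (Finset.sum_apply v S (Matrix.of fun i v => Γ i ⟨j, v⟩)).symm).trans this

private lemma A_nonempty (n : ℕ) (hn : 1 ≤ n) (h2 : 2 * n ≤ m) :
    ∃ A : Matrix (Fin m) (Fin n) (ZMod 2), IsAMem 1 A := by
  set c : Fin m → Fin n := fun i => ⟨min ((i : ℕ) / 2) (n - 1), by omega⟩ with hc
  refine ⟨Matrix.of fun i v => if v = c i then 1 else 0, ?_, ?_⟩
  · intro i
    have hiff : ∀ v : Fin n, ((if v = c i then (1 : ZMod 2) else 0) ≠ 0) ↔ v = c i := by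
      intro v
      by_cases h : v = c i <;> simp [h]
    simp only [Matrix.of_apply]
    rw [Nat.card_congr (Equiv.subtypeEquivRight hiff), Nat.card_eq_fintype_card,
      Fintype.card_subtype_eq]
  · intro v
    have hv := v.2
    have h0 : (2 * (v : ℕ)) < m := by omega
    have h1 : (2 * (v : ℕ) + 1) < m := by omega
    have hc0 : c ⟨2 * (v : ℕ), h0⟩ = v := by
      apply Fin.ext
      simp only [hc]
      omega
    have hc1 : c ⟨2 * (v : ℕ) + 1, h1⟩ = v := by
      apply Fin.ext
      simp only [hc]
      omega
    rw [Nat.card_eq_fintype_card]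
    apply Fintype.one_lt_card_iff_nontrivial.mpr
    refine ⟨⟨⟨⟨2 * (v : ℕ), h0⟩, ?_⟩, ⟨⟨2 * (v : ℕ) + 1, h1⟩, ?_⟩, ?_⟩⟩
    · show (if v = c ⟨2 * (v : ℕ), h0⟩ then (1 : ZMod 2) else 0) ≠ 0
      rw [if_pos hc0.symm]
      exact one_ne_zero
    · show (if v = c ⟨2 * (v : ℕ) + 1, h1⟩ then (1 : ZMod 2) else 0) ≠ 0
      rw [if_pos hc1.symm]
      exact one_ne_zero
    · simp only [ne_eq, Subtype.mk.injEq, Fin.mk.injEq]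
      omega

private lemma sum_xl {ι : Type*} [Fintype ι] [DecidableEq ι] (ℓ : ℕ) (Q : Matrix (Fin m) ι (ZMod 2) → Prop) :
    ∑ Γ ∈ univ.filter Q, Xl ℓ Γ
      = ∑ S ∈ univ.filter (fun S : Finset (Fin m) => S.card = ℓ),
          Nat.card {Γ : Matrix (Fin m) ι (ZMod 2) // Q Γ ∧ ∑ i ∈ S, Γ i = 0} := by
  have key : ∀ Γ : Matrix (Fin m) ι (ZMod 2), Xl ℓ Γ =
      ∑ S ∈ univ.filter (fun S : Finset (Fin m) => S.card = ℓ),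
        (if (∑ i ∈ S, Γ i = 0) then 1 else 0) := by
    intro Γ
    rw [xl_eq, Finset.card_filter, Finset.sum_filter]
    simp only [ite_and]
  simp only [key]
  rw [Finset.sum_comm]
  refine Finset.sum_congr rfl fun S _ => ?_
  rw [ncard_eq_filter, Finset.card_filter, Finset.sum_filter]
  refine Finset.sum_congr rfl fun Γ _ => ?_
  by_cases h1 : Q Γ <;> by_cases h2 : (∑ i ∈ S, Γ i = 0) <;> simp [h1, h2]

end Aux

set_option maxHeartbeats 1000000 in
theorem stmt5 (K m : ℕ) (hK : 1 ≤ K) (hm : 1 ≤ m)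
    (n : Fin K → ℕ) (hn : ∀ j, 1 ≤ n j) (h2n : ∀ j, 2 * n j ≤ m)
    (ℓ : ℕ) (hl1 : 1 ≤ ℓ) (hlm : ℓ ≤ m) :
    expectOn {Γ : Matrix (Fin m) ((j : Fin K) × Fin (n j)) (ZMod 2) | IsPsiMem Γ}
        (fun Γ => (Xl ℓ Γ : ℝ))
      = (m.choose ℓ : ℝ) ^ ((1:ℤ) - (K:ℤ)) *
        ∏ j : Fin K,
          expectOn {A : Matrix (Fin m) (Fin (n j)) (ZMod 2) | IsAMem 1 A}
            (fun A => (Xl ℓ A : ℝ)) := by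
  classical
  -- a fixed critical-candidate set of size ℓ
  obtain ⟨S₀, -, hS₀⟩ := Finset.exists_subset_card_eq
    (show ℓ ≤ (univ : Finset (Fin m)).card by simpa)
  set ch := m.choose ℓ with hch
  have hSl : (univ.filter (fun S : Finset (Fin m) => S.card = ℓ)).card = ch := by
    have h1 : Fintype.card {s : Finset (Fin m) // s.card = ℓ} = ch := by
      rw [Fintype.card_finset_len, Fintype.card_fin]
    rw [← h1, Fintype.card_subtype]
  have hchpos : 0 < ch := Nat.choose_pos hlm
  -- per-block counts
  set N : Fin K → ℕ := fun j =>
    Nat.card {A : Matrix (Fin m) (Fin (n j)) (ZMod 2) // IsAMem 1 A ∧ ∑ i ∈ S₀, A i = 0}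
    with hN
  set D : Fin K → ℕ := fun j =>
    Nat.card {A : Matrix (Fin m) (Fin (n j)) (ZMod 2) // IsAMem 1 A} with hD
  have hDpos : ∀ j, 0 < D j := by
    intro j
    obtain ⟨A, hA⟩ := A_nonempty (n j) (hn j) (h2n j)
    have : Nonempty {A : Matrix (Fin m) (Fin (n j)) (ZMod 2) // IsAMem 1 A} := ⟨⟨A, hA⟩⟩
    exact Nat.card_pos
  -- per-block numerator
  have hnum : ∀ j : Fin K,
      ∑ A ∈ univ.filter (fun A : Matrix (Fin m) (Fin (n j)) (ZMod 2) => IsAMem 1 A),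
        Xl ℓ A = ch * N j := by
    intro j
    rw [sum_xl]
    rw [Finset.sum_congr rfl (fun S hS => count_eq S₀ S
      (by rw [hS₀, (Finset.mem_filter.mp hS).2]))]
    rw [Finset.sum_const, hSl, smul_eq_mul]
  -- Psi numerator
  have hpsinum :
      ∑ Γ ∈ univ.filter (fun Γ : Matrix (Fin m) ((j : Fin K) × Fin (n j)) (ZMod 2) =>
          IsPsiMem Γ), Xl ℓ Γ = ch * ∏ j, N j := by
    rw [sum_xl]
    have hterm : ∀ S ∈ univ.filter (fun S : Finset (Fin m) => S.card = ℓ),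
        Nat.card {Γ : Matrix (Fin m) ((j : Fin K) × Fin (n j)) (ZMod 2) //
          IsPsiMem Γ ∧ ∑ i ∈ S, Γ i = 0} = ∏ j, N j := by
      intro S hS
      have : Nat.card {Γ : Matrix (Fin m) ((j : Fin K) × Fin (n j)) (ZMod 2) //
          IsPsiMem Γ ∧ ∑ i ∈ S, Γ i = 0}
          = Nat.card {Γ : Matrix (Fin m) ((j : Fin K) × Fin (n j)) (ZMod 2) //
          ∀ j : Fin K, IsAMem 1 (Matrix.of fun i v => Γ i ⟨j, v⟩) ∧
            ∑ i ∈ S, (Matrix.of fun i v => Γ i ⟨j, v⟩) i = 0} := by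
        apply Nat.card_congr
        apply Equiv.subtypeEquivRight
        intro Γ
        rw [IsPsiMem, crit_iff S Γ, forall_and]
      rw [this, psi_count K n (fun j A => IsAMem 1 A ∧ ∑ i ∈ S, A i = 0)]
      exact Finset.prod_congr rfl fun j _ => count_eq S₀ S
        (by rw [hS₀, (Finset.mem_filter.mp hS).2])
    rw [Finset.sum_congr rfl hterm, Finset.sum_const, hSl, smul_eq_mul]
  -- Psi denominator
  have hpsiden : Nat.card {Γ : Matrix (Fin m) ((j : Fin K) × Fin (n j)) (ZMod 2) //
      IsPsiMem Γ} = ∏ j, D j := by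
    have : Nat.card {Γ : Matrix (Fin m) ((j : Fin K) × Fin (n j)) (ZMod 2) // IsPsiMem Γ}
        = Nat.card {Γ : Matrix (Fin m) ((j : Fin K) × Fin (n j)) (ZMod 2) //
            ∀ j : Fin K, IsAMem 1 (Matrix.of fun i v => Γ i ⟨j, v⟩)} := rfl
    rw [this, psi_count K n (fun j A => IsAMem 1 A)]
  -- assemble
  rw [expectOn_eq, Finset.sum_congr rfl (fun Γ _ => rfl)]
  have cast1 : ∑ Γ ∈ univ.filter (fun Γ : Matrix (Fin m) ((j : Fin K) × Fin (n j)) (ZMod 2) =>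
      IsPsiMem Γ), ((Xl ℓ Γ : ℝ)) = (ch : ℝ) * ∏ j, (N j : ℝ) := by
    rw [← Nat.cast_sum, hpsinum]; push_cast; ring
  rw [cast1]
  have castden : ((univ.filter (fun Γ : Matrix (Fin m) ((j : Fin K) × Fin (n j)) (ZMod 2) =>
      IsPsiMem Γ)).card : ℝ) = ∏ j, (D j : ℝ) := by
    rw [← ncard_eq_filter, hpsiden]; push_cast; ring
  rw [castden]
  -- rewrite each factor on the RHS
  have hfac : ∀ j : Fin K,
      expectOn {A : Matrix (Fin m) (Fin (n j)) (ZMod 2) | IsAMem 1 A}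
        (fun A => (Xl ℓ A : ℝ)) = (ch : ℝ) * (N j : ℝ) / (D j : ℝ) := by
    intro j
    rw [expectOn_eq]
    have h1 : ∑ A ∈ univ.filter (fun A : Matrix (Fin m) (Fin (n j)) (ZMod 2) => IsAMem 1 A),
        ((Xl ℓ A : ℝ)) = (ch : ℝ) * (N j : ℝ) := by
      rw [← Nat.cast_sum, hnum j]; push_cast; ring
    have h2 : ((univ.filter (fun A : Matrix (Fin m) (Fin (n j)) (ZMod 2) =>
        IsAMem 1 A)).card : ℝ) = (D j : ℝ) := by
      rw [← ncard_eq_filter]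
    rw [h1, h2]
  rw [Finset.prod_congr rfl (fun j _ => hfac j)]
  -- pure field arithmetic
  have hchR : (ch : ℝ) ≠ 0 := by positivity
  have hDR : ∀ j : Fin K, (D j : ℝ) ≠ 0 := fun j => by
    have := hDpos j; positivity
  rw [Finset.prod_div_distrib, Finset.prod_mul_distrib, Finset.prod_const,
    Finset.card_univ, Fintype.card_fin]
  rw [zpow_sub₀ hchR, zpow_one, zpow_natCast]
  have hprodD : (∏ j : Fin K, (D j : ℝ)) ≠ 0 := Finset.prod_ne_zero_iff.mpr fun j _ => hDR j
  have hchK : ((ch : ℝ) ^ K) ≠ 0 := pow_ne_zero _ hchR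
  field_simp
end

section
/- Let K ≥ 3 be an integer. Let λ_K > 0 satisfy Q(λ_K) = K and let μ̃_K > 0 satisfy F(μ̃_K) = K, where F(z) = 1 + (e^z − 1)/z. Then μ̃_K < λ_K, and consequently h_K(μ̃_K) < h_K(λ_K); that is, c̃_K < c*_K where c̃_K = h_K(μ̃_K) and c*_K = h_K(λ_K). -/
/-- `Q(z) = z(e^z − 1)/(e^z − 1 − z)`. -/
noncomputable def Qfun (z : ℝ) : ℝ := z * (Real.exp z - 1) / (Real.exp z - 1 - z)

/-- `F(z) = 1 + (e^z − 1)/z`. -/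
noncomputable def Ffun (z : ℝ) : ℝ := 1 + (Real.exp z - 1) / z

/-- `h_K(μ) = μ/(e^{−μ}(e^μ − 1))^{K−1}`. -/
noncomputable def hFun (K : ℕ) (μ : ℝ) : ℝ :=
  μ / (Real.exp (-μ) * (Real.exp μ - 1)) ^ (K - 1)

lemma aux1 {z : ℝ} (hz : 0 < z) : 0 < z * Real.exp z - Real.exp z + 1 := by
  rcases le_or_gt 1 z with h | h
  · nlinarith [Real.exp_pos z]
  · have h1 : -z + 1 < Real.exp (-z) := Real.add_one_lt_exp (by linarith)
    have h2 : Real.exp (-z) * Real.exp z = 1 := by rw [← Real.exp_add]; simp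
    nlinarith [Real.exp_pos z]

lemma Fmono : StrictMonoOn Ffun (Set.Ioi 0) := by
  apply strictMonoOn_of_deriv_pos (convex_Ioi 0)
  · exact continuousOn_const.add
      ((Real.continuous_exp.continuousOn.sub continuousOn_const).div continuousOn_id
        (fun x hx => ne_of_gt hx))
  · intro x hx
    rw [interior_Ioi] at hx
    have hx0 : (0:ℝ) < x := hx
    have hd : HasDerivAt Ffun ((Real.exp x * x - (Real.exp x - 1) * 1) / x ^ 2) x := by
      have := (((Real.hasDerivAt_exp x).sub_const 1).div (hasDerivAt_id x) hx0.ne')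
      exact this.const_add 1
    rw [hd.deriv]
    apply div_pos _ (by positivity)
    have := aux1 hx0
    nlinarith

lemma Q_lt_F {z : ℝ} (hz : 0 < z) : Qfun z < Ffun z := by
  have hE : (0:ℝ) < Real.exp z - 1 := by
    have := Real.add_one_lt_exp (ne_of_gt hz); linarith
  have hEz : (0:ℝ) < Real.exp z - 1 - z := by
    have := Real.add_one_lt_exp (ne_of_gt hz); linarith
  have key : z ^ 2 * Real.exp z < (Real.exp z - 1) ^ 2 := by
    have hs : z / 2 < Real.sinh (z / 2) := Real.self_lt_sinh_iff.mpr (by positivity)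
    rw [Real.sinh_eq] at hs
    have he : Real.exp (-(z/2)) * Real.exp (z/2) = 1 := by rw [← Real.exp_add]; simp
    have hsq : Real.exp (z/2) * Real.exp (z/2) = Real.exp z := by
      rw [← Real.exp_add]; ring_nf
    have h1 : z * Real.exp (z/2) < Real.exp z - 1 := by
      nlinarith [Real.exp_pos (z/2)]
    nlinarith [Real.exp_pos (z/2), mul_pos hz (Real.exp_pos (z/2))]
  have hFz : Ffun z = (z + (Real.exp z - 1)) / z := by
    rw [Ffun]; field_simp
  rw [Qfun, hFz, div_lt_div_iff₀ hEz hz]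
  nlinarith [key]

theorem stmt16 (K : ℕ) (hK : 3 ≤ K)
    (lamK : ℝ) (hlam : 0 < lamK) (hQ : Qfun lamK = K)
    (muT : ℝ) (hmu : 0 < muT) (hF : Ffun muT = K) :
    muT < lamK ∧ hFun K muT < hFun K lamK := by
  have hFlam : Ffun muT < Ffun lamK := by
    rw [hF, ← hQ]; exact Q_lt_F hlam
  have hml : muT < lamK := (Fmono.lt_iff_lt hmu hlam).mp hFlam
  refine ⟨hml, ?_⟩
  set n : ℕ := K - 1 with hn
  have hn2 : 2 ≤ n := by omega
  have hncast : (n : ℝ) = (K : ℝ) - 1 := by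
    rw [hn]; push_cast [Nat.cast_sub (by omega : 1 ≤ K)]; ring
  -- rewrite hFun
  have hrw : ∀ μ : ℝ, Real.exp (-μ) * (Real.exp μ - 1) = 1 - Real.exp (-μ) := by
    intro μ
    rw [mul_sub, mul_one, ← Real.exp_add]; simp
  set H : ℝ → ℝ := fun μ => μ / (1 - Real.exp (-μ)) ^ n with hH
  have hHeq : ∀ μ : ℝ, hFun K μ = H μ := by
    intro μ; rw [hFun, hrw, hH]
  have hden : ∀ μ : ℝ, 0 < μ → 0 < 1 - Real.exp (-μ) := by
    intro μ hμ
    have : Real.exp (-μ) < 1 := Real.exp_lt_one_iff.mpr (by linarith)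
    linarith
  -- strict mono of H on Icc muT lamK
  have hmono : StrictMonoOn H (Set.Icc muT lamK) := by
    apply strictMonoOn_of_deriv_pos (convex_Icc muT lamK)
    · apply ContinuousOn.div continuousOn_id
      · exact (continuousOn_const.sub (Real.continuous_exp.comp continuous_neg).continuousOn).pow n
      · intro x hx
        have hx0 : 0 < x := lt_of_lt_of_le hmu hx.1
        exact pow_ne_zero n (ne_of_gt (hden x hx0))
    · intro x hx
      rw [interior_Icc] at hx
      have hx0 : 0 < x := lt_trans hmu hx.1
      have hg : 0 < 1 - Real.exp (-x) := hden x hx0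
      have h1 : HasDerivAt (fun y : ℝ => 1 - Real.exp (-y)) (Real.exp (-x)) x := by
        have := ((Real.hasDerivAt_exp (-x)).comp x (hasDerivAt_neg x)).const_sub 1
        simpa using this
      have h2 := h1.pow n
      have h3 := (hasDerivAt_id x).div h2 (pow_ne_zero n (ne_of_gt hg))
      have hd : HasDerivAt H
          ((1 * (1 - Real.exp (-x)) ^ n -
            x * (↑n * (1 - Real.exp (-x)) ^ (n - 1) * Real.exp (-x))) /
            ((1 - Real.exp (-x)) ^ n) ^ 2) x := h3
      rw [hd.deriv]
      apply div_pos _ (by positivity)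
      -- numerator positivity
      have hFx : Ffun muT < Ffun x := Fmono (Set.mem_Ioi.mpr hmu) (Set.mem_Ioi.mpr hx0) hx.1
      rw [hF, Ffun] at hFx
      have hexp : (K : ℝ) - 1 < (Real.exp x - 1) / x := by linarith
      have hnum : x * (n : ℝ) * Real.exp (-x) < 1 - Real.exp (-x) := by
        rw [hncast]
        have h4 : x * ((K : ℝ) - 1) < Real.exp x - 1 := by
          rw [lt_div_iff₀ hx0] at hexp; linarith [hexp]
        have h5 : Real.exp (-x) * Real.exp x = 1 := by rw [← Real.exp_add]; simp
        nlinarith [Real.exp_pos (-x)]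
      have hpow : (1 - Real.exp (-x)) ^ n = (1 - Real.exp (-x)) ^ (n - 1) * (1 - Real.exp (-x)) := by
        conv_lhs => rw [show n = (n - 1) + 1 by omega]
        rw [pow_succ]
      rw [hpow]
      have hpp : 0 < (1 - Real.exp (-x)) ^ (n - 1) := by positivity
      nlinarith [hpp, hnum]
  rw [hHeq, hHeq]
  exact hmono (Set.left_mem_Icc.mpr hml.le) (Set.right_mem_Icc.mpr hml.le) hml
end

section
/- Let K ≥ 3 be an integer, let λ_K > 0 satisfy Q(λ_K) = K, and set c*_K = h_K(λ_K). Then for every μ > 0 with F(μ) ≥ K (i.e., μ is at least the unique positive solution μ̃_K of F(μ̃_K) = K) and h_K(μ) > c*_K, one has Q(μ) > K. (Equivalently: if c > c*_K and μ_K(c) denotes the larger of the two solutions μ of h_K(μ) = c, then Q(μ_K(c)) > K.) -/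
open Real Set

private lemma expda17 (d a : ℝ) (hd : 0 ≤ d) (ha : a < 1) : exp d * (a - d) ≤ a := by
  rcases le_or_gt a d with h | h
  · have h1 : (1:ℝ) ≤ exp d := one_le_exp hd
    nlinarith
  · have h1 : d + 1 ≤ exp d := add_one_le_exp d
    have h2 : exp d * (1 - d) ≤ 1 := by
      have h3 : -d + 1 ≤ exp (-d) := add_one_le_exp (-d)
      have h4 : exp d * exp (-d) = 1 := by rw [← exp_add]; simp
      nlinarith [exp_pos d]
    nlinarith

private lemma ratio_mono17 {a t : ℝ} (ha : 0 < a) (hat : a ≤ t) :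
    t * (exp a - 1) ≤ a * (exp t - 1) := by
  have ht : 0 < t := lt_of_lt_of_le ha hat
  have h := convexOn_exp.2 (Set.mem_univ (0:ℝ)) (Set.mem_univ t)
      (show (0:ℝ) ≤ 1 - a/t by rw [sub_nonneg]; exact div_le_one_of_le₀ hat ht.le)
      (show (0:ℝ) ≤ a/t by positivity)
      (by ring)
  simp only [smul_eq_mul, mul_zero, zero_add, exp_zero, mul_one] at h
  rw [div_mul_cancel₀ _ ht.ne'] at h
  have h2 := mul_le_mul_of_nonneg_left h ht.le
  have h4 : t * (1 - a/t + a/t * exp t) = t - a + a * exp t := by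
    field_simp
  rw [h4] at h2
  nlinarith [h2]

private lemma hFun_mono17 (K : ℕ) (hK : 3 ≤ K) {a b : ℝ} (ha : 0 < a) (hab : a ≤ b)
    (hFa : ((K:ℝ) - 1) * a ≤ exp a - 1) : hFun K a ≤ hFun K b := by
  obtain ⟨p, hp⟩ : ∃ p, K - 1 = p + 1 := ⟨K - 2, by omega⟩
  have hmc : ((K - 1 : ℕ) : ℝ) = (K:ℝ) - 1 := by
    rw [Nat.cast_sub (by omega : 1 ≤ K)]; norm_num
  have hgpos : ∀ t : ℝ, 0 < t → 0 < exp (-t) * (exp t - 1) := fun t ht =>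
    mul_pos (exp_pos _) (by simpa using exp_lt_exp.2 ht)
  have hmono : MonotoneOn (fun x => x / (exp (-x) * (exp x - 1)) ^ (K-1)) (Icc a b) := by
    apply monotoneOn_of_hasDerivWithinAt_nonneg (f' := fun t =>
      (1 * (exp (-t) * (exp t - 1)) ^ (K-1) -
        t * (((K-1:ℕ) : ℝ) * (exp (-t) * (exp t - 1)) ^ (K-1-1) * exp (-t))) /
        ((exp (-t) * (exp t - 1)) ^ (K-1)) ^ 2)
      (convex_Icc a b)
    · apply ContinuousOn.div continuousOn_id
      · fun_prop
      · intro x hx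
        exact (pow_ne_zero _ (hgpos x (lt_of_lt_of_le ha hx.1)).ne')
    · intro t ht
      rw [interior_Icc] at ht
      have hd1 : HasDerivAt (fun x => exp (-x)) (-exp (-t)) t := by
        exact ((Real.hasDerivAt_exp (-t)).comp t (hasDerivAt_neg t)).congr_deriv (by ring)
      have hd2 : HasDerivAt (fun x => exp x - 1) (exp t) t :=
        (Real.hasDerivAt_exp t).sub_const 1
      have hdg : HasDerivAt (fun x => exp (-x) * (exp x - 1)) (exp (-t)) t := by
        exact (hd1.mul hd2).congr_deriv (by ring)
      have hdgm := hdg.pow (K-1)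
      have hdf := (hasDerivAt_id t).div hdgm
        (pow_ne_zero _ (hgpos t (lt_trans ha ht.1)).ne')
      exact hdf.hasDerivWithinAt
    · intro t ht
      rw [interior_Icc] at ht
      have htpos : 0 < t := lt_trans ha ht.1
      have hgt : 0 < exp (-t) * (exp t - 1) := hgpos t htpos
      apply div_nonneg _ (sq_nonneg _)
      have hFt : ((K:ℝ) - 1) * t ≤ exp t - 1 := by
        have h1 := ratio_mono17 ha ht.1.le
        have h2 := mul_le_mul_of_nonneg_left hFa (le_of_lt htpos)
        have h3 : t * (((K:ℝ) - 1) * a) ≤ a * (exp t - 1) := le_trans h2 h1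
        have h4 : a * (((K:ℝ) - 1) * t) ≤ a * (exp t - 1) := by nlinarith
        exact le_of_mul_le_mul_left (by linarith [h4]) ha
      have hgval : exp (-t) * (exp t - 1) - t * ((K-1:ℕ):ℝ) * exp (-t) ≥ 0 := by
        have : exp (-t) * (exp t - 1) - t * ((K-1:ℕ):ℝ) * exp (-t)
            = exp (-t) * ((exp t - 1) - ((K-1:ℕ):ℝ) * t) := by ring
        rw [this]
        apply mul_nonneg (exp_pos _).le
        rw [hmc]; nlinarith [hFt]
      rw [hp]
      simp only [Nat.add_sub_cancel, pow_succ]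
      rw [← hp]
      nlinarith [mul_nonneg (pow_nonneg hgt.le p) hgval]
  have := hmono (left_mem_Icc.2 hab) (right_mem_Icc.2 hab) hab
  simpa only [hFun] using this

set_option maxHeartbeats 1000000 in
theorem stmt17 (K : ℕ) (hK : 3 ≤ K)
    (lamK : ℝ) (hlam : 0 < lamK) (hQ : Qfun lamK = K)
    (cstar : ℝ) (hcs : cstar = hFun K lamK)
    (μ : ℝ) (hμ : 0 < μ) (hFμ : (K : ℝ) ≤ Ffun μ) (hh : cstar < hFun K μ) :
    (K : ℝ) < Qfun μ := by
  have hn3 : (3:ℝ) ≤ (K:ℝ) := by exact_mod_cast hK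
  have hE1 : 1 + lamK < exp lamK := by
    have := add_one_lt_exp (ne_of_gt hlam)
    linarith
  have hD : 0 < exp lamK - 1 - lamK := by linarith
  have heq : lamK * (exp lamK - 1) = (K:ℝ) * (exp lamK - 1 - lamK) := by
    rw [Qfun, div_eq_iff hD.ne'] at hQ
    linarith [hQ]
  have hFμ' : ((K:ℝ) - 1) * μ ≤ exp μ - 1 := by
    rw [Ffun] at hFμ
    have h : (K:ℝ) - 1 ≤ (exp μ - 1) / μ := by linarith
    calc ((K:ℝ)-1) * μ ≤ ((exp μ - 1)/μ) * μ := mul_le_mul_of_nonneg_right h hμ.le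
      _ = exp μ - 1 := by field_simp
  -- Step 1: lamK < μ
  have hlμ : lamK < μ := by
    by_contra hcon
    push_neg at hcon
    have := hFun_mono17 K hK hμ hcon hFμ'
    rw [← hcs] at this
    linarith
  -- Step 2: key facts from Q(lamK) = K
  have hcub : 1 + lamK + lamK^2/2 + lamK^3/6 ≤ exp lamK := by
    have h := sum_le_exp_of_nonneg hlam.le 4
    have hsum : ∑ i ∈ Finset.range 4, lamK ^ i / (Nat.factorial i)
        = 1 + lamK + lamK^2/2 + lamK^3/6 := by
      rw [Finset.sum_range_succ, Finset.sum_range_succ, Finset.sum_range_succ,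
        Finset.sum_range_succ, Finset.sum_range_zero]
      norm_num [Nat.factorial]
    rw [hsum] at h
    exact h
  have hln : lamK < (K:ℝ) := by nlinarith
  have hB : (K:ℝ) * (3 + lamK) ≤ lamK^2 + 3*lamK + 6 := by
    nlinarith [mul_nonneg (sub_nonneg.2 hln.le) (sub_nonneg.2 hcub)]
  have hl2 : (K:ℝ) - 2 < lamK := by nlinarith
  have hkey : (K:ℝ) * ((K:ℝ) - 2) < lamK * ((K:ℝ) - 1) := by nlinarith
  have h1 : 0 < lamK * (lamK * ((K:ℝ) - 1) - (K:ℝ) * ((K:ℝ) - 2)) :=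
    mul_pos hlam (by linarith)
  have hphi : 0 < exp lamK * (lamK + 1 - (K:ℝ)) + (K:ℝ) - 1 := by
    nlinarith [h1, mul_pos (sub_pos.2 hln) (sub_pos.2 hln)]
  -- Step 3: φ strictly increasing on [lamK, ∞)
  have hmono : StrictMonoOn (fun t => (t - (K:ℝ)) * (exp t - 1) + (K:ℝ) * t) (Ici lamK) := by
    apply strictMonoOn_of_hasDerivWithinAt_pos
      (f' := fun t => exp t * (t + 1 - (K:ℝ)) + (K:ℝ) - 1) (convex_Ici lamK)
    · fun_prop
    · intro t ht
      rw [interior_Ici] at ht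
      have hdf : HasDerivAt (fun t => (t - (K:ℝ)) * (exp t - 1) + (K:ℝ) * t)
          (exp t * (t + 1 - (K:ℝ)) + (K:ℝ) - 1) t := by
        have := (((hasDerivAt_id t).sub_const (K:ℝ)).mul
          ((Real.hasDerivAt_exp t).sub_const 1)).add ((hasDerivAt_id t).const_mul (K:ℝ))
        exact this.congr_deriv (by simp only [id]; ring)
      exact hdf.hasDerivWithinAt
    · intro t ht
      rw [interior_Ici] at ht
      have hd0 : 0 ≤ t - lamK := by linarith [(mem_Ioi.1 ht).le]
      have ha1 : (K:ℝ) - 1 - lamK < 1 := by linarith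
      have hda := expda17 (t - lamK) ((K:ℝ) - 1 - lamK) hd0 ha1
      have hexpt : exp t = exp lamK * exp (t - lamK) := by
        rw [← exp_add]; ring_nf
      have h5 : exp lamK * (lamK + 1 - (K:ℝ)) ≤ exp t * (t + 1 - (K:ℝ)) := by
        rw [hexpt]
        have h6 := mul_le_mul_of_nonneg_left hda (exp_pos lamK).le
        nlinarith [h6]
      linarith
  -- Step 4: conclude
  have hφl : (lamK - (K:ℝ)) * (exp lamK - 1) + (K:ℝ) * lamK = 0 := by
    linear_combination heq
  have hφμ : 0 < (μ - (K:ℝ)) * (exp μ - 1) + (K:ℝ) * μ := by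
    have h7 := hmono (self_mem_Ici) (show μ ∈ Ici lamK from le_of_lt hlμ) hlμ
    simp only at h7
    linarith [h7, hφl]
  have hDμ : 0 < exp μ - 1 - μ := by
    have := add_one_lt_exp (ne_of_gt hμ)
    linarith
  rw [Qfun, lt_div_iff₀ hDμ]
  nlinarith [hφμ]
end

section
/- Let V be a finite set and let H be a finite collection of nonempty subsets of V (a hypergraph edge set). Let C₁, C₂ ⊆ H be edge sets, each having minimum degree at least 2 (so core(C₁) = C₁ and core(C₂) = C₂), with the same vertex support V(C₁) = V(C₂) and the same cardinality |C₁| = |C₂|. Then for every integer m, the number of subsets E ⊆ H with |E| = m and core(E) = C₁ equals the number of subsets E ⊆ H with |E| = m and core(E) = C₂. (That is, the number of hypergraphs G ⊆ H with m edges whose 2-core is a given sub-hypergraph depends only on m, the number of edges of the core, H, and the vertex support of the core.) -/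
/-- The vertex support of an edge set: the union of its edges. -/
def vsupp {α : Type*} [DecidableEq α] (E : Finset (Finset α)) : Finset α := E.sup id

/-- An edge set has minimum degree at least 2 if every vertex of its support
belongs to at least two edges. -/
def MinDeg2 {α : Type*} [DecidableEq α] (E : Finset (Finset α)) : Prop :=
  ∀ v ∈ vsupp E, 2 ≤ (E.filter fun e => v ∈ e).card

/-- `C` is the 2-core of `E`: the (unique) maximal subset of `E` with minimum
degree at least 2. -/
def IsCore {α : Type*} [DecidableEq α] (E C : Finset (Finset α)) : Prop :=
  C ⊆ E ∧ MinDeg2 C ∧ ∀ D ⊆ E, MinDeg2 D → D ⊆ C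

section Aux

variable {α : Type*} [DecidableEq α]

lemma mem_vsupp {E : Finset (Finset α)} {v : α} :
    v ∈ vsupp E ↔ ∃ e ∈ E, v ∈ e := by
  simp [vsupp, Finset.mem_sup]

lemma vsupp_union (C S : Finset (Finset α)) : vsupp (C ∪ S) = vsupp C ∪ vsupp S := by
  simp [vsupp, Finset.sup_union]

lemma minDeg2_union_iff {C S : Finset (Finset α)} (hC : MinDeg2 C) :
    MinDeg2 (C ∪ S) ↔ ∀ v ∈ vsupp S, v ∉ vsupp C → 2 ≤ (S.filter fun e => v ∈ e).card := by
  constructor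
  · intro h v hvS hvC
    have hv : v ∈ vsupp (C ∪ S) := by
      rw [vsupp_union]; exact Finset.mem_union_right _ hvS
    have h2 := h v hv
    have hfC : C.filter (fun e => v ∈ e) = ∅ := by
      rw [Finset.filter_eq_empty_iff]
      intro e he hve
      exact hvC (mem_vsupp.mpr ⟨e, he, hve⟩)
    rwa [Finset.filter_union, hfC, Finset.empty_union] at h2
  · intro h v hv
    rw [vsupp_union, Finset.mem_union] at hv
    by_cases hvC : v ∈ vsupp C
    · exact le_trans (hC v hvC)
        (Finset.card_le_card (Finset.filter_subset_filter _ Finset.subset_union_left))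
    · have hvS : v ∈ vsupp S := hv.resolve_left hvC
      exact le_trans (h v hvS hvC)
        (Finset.card_le_card (Finset.filter_subset_filter _ Finset.subset_union_right))

/-- The key transfer: maximality of the core over `C ∪ T` depends only on the
support of `C`. -/
lemma core_transfer {C₁ C₂ T : Finset (Finset α)}
    (hd1 : MinDeg2 C₁) (hsupp : vsupp C₁ = vsupp C₂)
    (hT1 : Disjoint T C₁)
    (h : ∀ D ⊆ C₁ ∪ T, MinDeg2 D → D ⊆ C₁) :
    ∀ D ⊆ C₂ ∪ T, MinDeg2 D → D ⊆ C₂ := by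
  intro D hDsub hD
  have hDT : D \ C₂ ⊆ T := by
    intro e he
    rcases Finset.mem_sdiff.mp he with ⟨heD, heC⟩
    exact (Finset.mem_union.mp (hDsub heD)).resolve_left heC
  have hD' : MinDeg2 (C₁ ∪ (D \ C₂)) := by
    rw [minDeg2_union_iff hd1]
    intro v hvS hvC
    rw [hsupp] at hvC
    have hvD : v ∈ vsupp D := by
      rcases mem_vsupp.mp hvS with ⟨e, he, hve⟩
      exact mem_vsupp.mpr ⟨e, (Finset.mem_sdiff.mp he).1, hve⟩
    refine le_trans (hD v hvD) (Finset.card_le_card ?_)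
    intro e he
    rcases Finset.mem_filter.mp he with ⟨heD, hve⟩
    refine Finset.mem_filter.mpr ⟨Finset.mem_sdiff.mpr ⟨heD, fun heC => ?_⟩, hve⟩
    exact hvC (mem_vsupp.mpr ⟨e, heC, hve⟩)
  have hsub' : C₁ ∪ (D \ C₂) ⊆ C₁ ∪ T :=
    Finset.union_subset_union_right hDT
  have hres := h _ hsub' hD'
  have hempty : D \ C₂ = ∅ := by
    refine Finset.eq_empty_of_forall_notMem fun e he => ?_
    have h1 : e ∈ C₁ := hres (Finset.mem_union_right _ he)
    have h2 : e ∈ T := hDT he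
    exact (Finset.disjoint_left.mp hT1) h2 h1
  exact Finset.sdiff_eq_empty_iff_subset.mp hempty

/-- Edges of a set whose core is `C₁` that lie outside `C₁` are not contained
in the support of `C₁`: in particular they avoid `C₂`. -/
lemma sdiff_disjoint_of_core {C₁ C₂ E : Finset (Finset α)}
    (hsupp : vsupp C₁ = vsupp C₂) (hcore : IsCore E C₁) :
    Disjoint (E \ C₁) C₂ := by
  rw [Finset.disjoint_left]
  intro e he heC₂
  rcases Finset.mem_sdiff.mp he with ⟨heE, heC₁⟩
  have hsub : e ⊆ vsupp C₁ := by
    rw [hsupp]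
    intro v hv
    exact mem_vsupp.mpr ⟨e, heC₂, hv⟩
  have hmd : MinDeg2 (C₁ ∪ {e}) := by
    rw [minDeg2_union_iff hcore.2.1]
    intro v hv hvC
    simp only [vsupp, Finset.sup_singleton, id] at hv
    exact absurd (hsub hv) hvC
  have h := hcore.2.2 (C₁ ∪ {e})
    (Finset.union_subset hcore.1 (Finset.singleton_subset_iff.mpr heE)) hmd
  exact heC₁ (h (Finset.mem_union_right _ (Finset.mem_singleton_self e)))

/-- The one-sided transfer of the full condition. -/
lemma step {H C₁ C₂ : Finset (Finset α)} (h1 : C₁ ⊆ H) (h2 : C₂ ⊆ H)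
    (hd1 : MinDeg2 C₁) (hd2 : MinDeg2 C₂) (hsupp : vsupp C₁ = vsupp C₂)
    (hcard : C₁.card = C₂.card) {m : ℕ} {E : Finset (Finset α)}
    (hE : E ⊆ H ∧ E.card = m ∧ IsCore E C₁) :
    ((E \ C₁) ∪ C₂) ⊆ H ∧ ((E \ C₁) ∪ C₂).card = m ∧ IsCore ((E \ C₁) ∪ C₂) C₂ := by
  obtain ⟨hEH, hEm, hcore⟩ := hE
  have hdisj : Disjoint (E \ C₁) C₂ := sdiff_disjoint_of_core hsupp hcore
  have hC₁E : C₁ ⊆ E := hcore.1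
  refine ⟨Finset.union_subset (le_trans (Finset.sdiff_subset) hEH) h2, ?_, ?_, hd2, ?_⟩
  · rw [Finset.card_union_of_disjoint hdisj, Finset.card_sdiff_of_subset hC₁E, hcard,
      Nat.sub_add_cancel (hcard ▸ Finset.card_le_card hC₁E), hEm]
  · exact Finset.subset_union_right
  · have hmax : ∀ D ⊆ C₁ ∪ (E \ C₁), MinDeg2 D → D ⊆ C₁ := by
      rw [Finset.union_sdiff_of_subset hC₁E]
      exact hcore.2.2
    have := core_transfer hd1 hsupp (Finset.sdiff_disjoint) hmax
    intro D hD hDmd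
    refine this D (fun e he => ?_) hDmd
    rcases Finset.mem_union.mp (hD he) with h | h
    · exact Finset.mem_union_right _ h
    · exact Finset.mem_union_left _ h

end Aux

theorem stmt18 {α : Type*} [DecidableEq α] [Fintype α]
    (H : Finset (Finset α)) (hH : ∀ e ∈ H, e.Nonempty)
    (C₁ C₂ : Finset (Finset α)) (h1 : C₁ ⊆ H) (h2 : C₂ ⊆ H)
    (hd1 : MinDeg2 C₁) (hd2 : MinDeg2 C₂)
    (hsupp : vsupp C₁ = vsupp C₂) (hcard : C₁.card = C₂.card)
    (m : ℕ) :
    Nat.card {E : Finset (Finset α) // E ⊆ H ∧ E.card = m ∧ IsCore E C₁}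
      = Nat.card {E : Finset (Finset α) // E ⊆ H ∧ E.card = m ∧ IsCore E C₂} := by
  have key : ∀ (C₁ C₂ : Finset (Finset α)), C₁ ⊆ H → C₂ ⊆ H → MinDeg2 C₁ → MinDeg2 C₂ →
      vsupp C₁ = vsupp C₂ → C₁.card = C₂.card →
      ∀ E : {E : Finset (Finset α) // E ⊆ H ∧ E.card = m ∧ IsCore E C₁},
        (E.1 \ C₁ ∪ C₂) ⊆ H ∧ (E.1 \ C₁ ∪ C₂).card = m ∧ IsCore (E.1 \ C₁ ∪ C₂) C₂ :=
    fun C₁ C₂ h1 h2 hd1 hd2 hsupp hcard E => step h1 h2 hd1 hd2 hsupp hcard E.2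
  refine Nat.card_congr ⟨fun E => ⟨E.1 \ C₁ ∪ C₂, key C₁ C₂ h1 h2 hd1 hd2 hsupp hcard E⟩,
    fun E => ⟨E.1 \ C₂ ∪ C₁, key C₂ C₁ h2 h1 hd2 hd1 hsupp.symm hcard.symm E⟩, ?_, ?_⟩
  · rintro ⟨E, hE⟩
    have hdisj : Disjoint (E \ C₁) C₂ := sdiff_disjoint_of_core hsupp hE.2.2
    apply Subtype.ext
    simp only
    rw [Finset.union_sdiff_cancel_right hdisj, Finset.sdiff_union_of_subset hE.2.2.1]
  · rintro ⟨E, hE⟩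
    have hdisj : Disjoint (E \ C₂) C₁ := sdiff_disjoint_of_core hsupp.symm hE.2.2
    apply Subtype.ext
    simp only
    rw [Finset.union_sdiff_cancel_right hdisj, Finset.sdiff_union_of_subset hE.2.2.1]
end
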